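/- In any satisfying assignment of T(S,F), no expanded goal state and expanded non-goal state of S have the same abstract state over the selected features; consequently, any DNF formula G whose terms are exactly the abstract states of expanded goal states in S satisfies: an expanded state s of S satisfies G if and only if s is a goal state. -/

import Mathlib

inductive Change
  | inc | dec | same
deriving DecidableEq

def delta (v v' : ℕ) : Change := if v < v' then .inc else if v' < v then .dec else .same

/-- Qualitative (boolean) value of feature `f` at state `s`: whether its value is 0. -/
def qv {State F : Type} (val : F → State → ℕ) (f : F) (s : State) : Bool :=
  decide (val f s = 0)

def Expanded {State : Type} (S : Set (State × State)) (s : State) : Prop := ∃ s', (s, s') ∈ S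

structure Act (F : Type) where
  pre : F → Option Bool
  eff : F → Option Change

/-- The abstract action `a` is defined only over the features in `sel`. -/
def Over {F : Type} (sel : F → Prop) (a : Act F) : Prop :=
  ∀ f, ¬ sel f → a.pre f = none ∧ a.eff f = none

/-- `a` is applicable in the abstract state of `s`. -/
def App {State F : Type} (val : F → State → ℕ) (a : Act F) (s : State) : Prop :=
  ∀ (f : F) (b : Bool), a.pre f = some b → qv val f s = b

/-- `a` is applicable at `s` and has the same qualitative effects over the selected
features as the transition (s,s'). -/
def Matches {State F : Type} (val : F → State → ℕ) (sel : F → Prop) (a : Act F)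
    (s s' : State) : Prop :=
  App val a s ∧ ∀ f, sel f → (a.eff f).getD .same = delta (val f s) (val f s')

def SoundRel {State F : Type} (val : F → State → ℕ) (S : Set (State × State))
    (sel : F → Prop) (A : Set (Act F)) : Prop :=
  ∀ a ∈ A, ∀ s, Expanded S s → App val a s → ∃ s', (s, s') ∈ S ∧ Matches val sel a s s'

def CompleteRel {State F : Type} (val : F → State → ℕ) (S : Set (State × State))
    (sel : F → Prop) (A : Set (Act F)) : Prop :=
  ∀ p ∈ S, ∃ a ∈ A, Matches val sel a p.1 p.2

/-- Satisfaction of the theory T(S,F) by an assignment (sel, d1, d2):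
clause families (1)-(4). -/
def SatT {State F : Type} (S : Set (State × State)) (goal : State → Prop)
    (val : F → State → ℕ) (sel : F → Prop) (d1 : State → State → Prop)
    (d2 : State → State → State → State → Prop) : Prop :=
  (∀ s t, Expanded S s → Expanded S t →
      (d1 s t ↔ ∃ f, sel f ∧ qv val f s ≠ qv val f t)) ∧
  (∀ s s' t t', (s, s') ∈ S → (t, t') ∈ S →
      (d2 s s' t t' ↔ ∃ f, sel f ∧ qv val f s = qv val f t ∧
          delta (val f s) (val f s') ≠ delta (val f t) (val f t'))) ∧
  (∀ s s' t, (s, s') ∈ S → Expanded S t → ¬ d1 s t →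
      ∃ t', (t, t') ∈ S ∧ ¬ d2 s s' t t') ∧
  (∀ s t, Expanded S s → Expanded S t → (goal s ↔ ¬ goal t) → d1 s t)

open scoped Classical in
/-- The abstract action extracted from transition (s,s') over the selected features. -/
noncomputable def extract {State F : Type} (val : F → State → ℕ) (sel : F → Prop)
    (s s' : State) : Act F :=
  { pre := fun f => if sel f then some (qv val f s) else none,
    eff := fun f => if sel f then some (delta (val f s) (val f s')) else none }

open scoped Classical in
/-- Abstract state of `s` over the selected features. -/
noncomputable def absSt {State F : Type} (val : F → State → ℕ) (sel : F → Prop)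
    (s : State) : F → Option Bool :=
  fun f => if sel f then some (qv val f s) else none

theorem absSt_eq_iff {State F : Type} {val : F → State → ℕ} {sel : F → Prop} {s t : State} :
    absSt val sel s = absSt val sel t ↔ ∀ f, sel f → qv val f s = qv val f t := by
  constructor
  · intro h f hf
    simpa [absSt, hf] using congrFun h f
  · intro h
    funext f
    by_cases hf : sel f <;> simp [absSt, hf, h]

namespace SatT

variable {State F : Type} {S : Set (State × State)} {goal : State → Prop}
  {val : F → State → ℕ} {sel : F → Prop} {d1 : State → State → Prop}
  {d2 : State → State → State → State → Prop}

/-- Clause family (4) forces `d1 s t`, and family (1) turns it into a selected feature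
on which `s` and `t` differ qualitatively. -/
theorem absSt_ne (h : SatT S goal val sel d1 d2) {s t : State} (hs : Expanded S s)
    (ht : Expanded S t) (hgs : goal s) (hgt : ¬ goal t) :
    absSt val sel s ≠ absSt val sel t := by
  intro heq
  obtain ⟨f, hf, hne⟩ := (h.1 s t hs ht).mp (h.2.2.2 s t hs ht (iff_of_true hgs hgt))
  exact hne (absSt_eq_iff.mp heq f hf)

theorem exists_goal_absSt_eq_iff (h : SatT S goal val sel d1 d2) {s : State}
    (hs : Expanded S s) :
    (∃ t, Expanded S t ∧ goal t ∧ absSt val sel s = absSt val sel t) ↔ goal s := by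
  refine ⟨?_, fun hgs => ⟨s, hs, hgs, rfl⟩⟩
  rintro ⟨t, ht, hgt, heq⟩
  by_contra hgs
  exact h.absSt_ne ht hs hgt hgs heq.symm

end SatT

/-- In any satisfying assignment of T(S,F), no expanded goal state and
expanded non-goal state share an abstract state over the selected features; hence a
state satisfies the DNF whose terms are the abstract states of expanded goal states
iff it is a goal state. -/
theorem stmt10 {State F : Type} (S : Set (State × State)) (goal : State → Prop)
    (val : F → State → ℕ) (sel : F → Prop) (d1 : State → State → Prop)
    (d2 : State → State → State → State → Prop)
    (h : SatT S goal val sel d1 d2) :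
    (∀ s t, Expanded S s → Expanded S t → goal s → ¬ goal t →
        absSt val sel s ≠ absSt val sel t) ∧
    (∀ s, Expanded S s →
        ((∃ t, Expanded S t ∧ goal t ∧ absSt val sel s = absSt val sel t) ↔ goal s)) :=
  ⟨fun _ _ hs ht => h.absSt_ne hs ht, fun _ hs => h.exists_goal_absSt_eq_iff hs⟩
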